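/- Let f be a C² functional on a Hilbert space X, c ∈ ℝ, F a connected component of f^c, and 𝓕 its basin of attraction under the normalized steepest descent flow. If x̄ ∈ ∂𝓕 is a minimizer of f restricted to ∂𝓕, then x̄ is a critical point of f. -/

import Mathlib

open Filter Topology Metric Set

variable {X : Type*} [NormedAddCommGroup X] [InnerProductSpace ℝ X] [CompleteSpace X]

/-- The normalized steepest descent flow of `f`:
`η(0,x) = x` and `dη/dt = -∇f(η)/(1+‖∇f(η)‖)`. -/
def IsNSDFlow (f : X → ℝ) (η : ℝ → X → X) : Prop :=
  (∀ x, η 0 x = x) ∧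
  ∀ x t, HasDerivAt (fun s => η s x)
    (-((1 + ‖gradient f (η t x)‖)⁻¹ • gradient f (η t x))) t

/-- The ω-limit set of `x` for the flow `η`. -/
def omegaLim (η : ℝ → X → X) (x : X) : Set X :=
  {y | ∃ t : ℕ → ℝ, Tendsto t atTop atTop ∧ Tendsto (fun n => η (t n) x) atTop (𝓝 y)}

/-- `x₀` is a strict local minimizer of `f`. -/
def StrictLocalMin (f : X → ℝ) (x₀ : X) : Prop :=
  ∃ r₀ > 0, ∀ r : ℝ, 0 < r → r < r₀ → ∃ ε > 0, ∀ y ∈ Metric.sphere x₀ r, f x₀ + ε ≤ f y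

/-- The loop `γ : [0,1] → X` is contractible within the set `S`. -/
def LoopContractibleIn (S : Set X) (γ : ℝ → X) : Prop :=
  ∃ (h : ℝ → ℝ → X) (x₀ : X),
    ContinuousOn (fun p : ℝ × ℝ => h p.1 p.2) (Icc 0 1 ×ˢ Icc 0 1) ∧
    (∀ l ∈ Icc (0:ℝ) 1, ∀ s ∈ Icc (0:ℝ) 1, h l s ∈ S) ∧
    (∀ s ∈ Icc (0:ℝ) 1, h 0 s = γ s) ∧
    (∀ s ∈ Icc (0:ℝ) 1, h 1 s = x₀) ∧
    ∀ l ∈ Icc (0:ℝ) 1, h l 0 = h l 1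

/-- A subset `S` is simply connected: every loop in `S` is contractible in `S`. -/
def SimplyConnIn (S : Set X) : Prop :=
  ∀ γ : ℝ → X, ContinuousOn γ (Icc 0 1) → (∀ s ∈ Icc (0:ℝ) 1, γ s ∈ S) →
    γ 0 = γ 1 → LoopContractibleIn S γ

/-!
The normalized field `-∇f/(1+‖∇f‖)` is bounded by `1` and locally Lipschitz, so for small
`T ≥ 0` the time-`T` map `η T` is Lipschitz near `x̄` (Grönwall). Since `η` is a flow, `x` and
`η T x` have the same ω-limit set, so `η T` preserves the basin `𝓕` and its complement; being
continuous at `x̄`, it therefore maps `x̄ ∈ ∂𝓕` to `η T x̄ ∈ ∂𝓕`. If `∇f(x̄) ≠ 0`, then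
`d/dt f(η t x̄) = -‖∇f‖²/(1+‖∇f‖) < 0` at `t = 0`, so `f(η T x̄) < f(x̄)` for small `T > 0`,
contradicting the minimality of `x̄` on `∂𝓕`.
-/

lemma ContinuousAt.mem_frontier_of_preimage_eq {α β : Type*} [TopologicalSpace α]
    [TopologicalSpace β] {g : α → β} {s : Set α} {t : Set β} {x : α}
    (hg : ContinuousAt g x) (hst : g ⁻¹' t = s) (hx : x ∈ frontier s) : g x ∈ frontier t := by
  rw [frontier_eq_closure_inter_closure] at hx ⊢
  exact ⟨hg.continuousWithinAt.mem_closure hx.1 fun z hz => (hst ▸ hz : z ∈ g ⁻¹' t),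
    hg.continuousWithinAt.mem_closure hx.2 fun z hz => (hst ▸ hz : z ∉ g ⁻¹' t)⟩

lemma HasDerivAt.eventually_lt_of_neg {φ : ℝ → ℝ} {d x : ℝ} (h : HasDerivAt φ d x)
    (hd : d < 0) : ∀ᶠ t in 𝓝[>] x, φ t < φ x := by
  filter_upwards [h.hasDerivWithinAt.limsup_slope_le' (lt_irrefl x) hd, self_mem_nhdsWithin]
    with t hslope ht
  rw [slope_def_field, div_lt_iff₀ (sub_pos.2 ht), zero_mul] at hslope
  linarith

theorem ODE_solution_unique_of_locallyLipschitz {E : Type*} [NormedAddCommGroup E]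
    [NormedSpace ℝ E] {V : E → E} (hV : LocallyLipschitz V) {c₁ c₂ : ℝ → E}
    (h₁ : ∀ t, HasDerivAt c₁ (V (c₁ t)) t) (h₂ : ∀ t, HasDerivAt c₂ (V (c₂ t)) t)
    {t₀ : ℝ} (h₀ : c₁ t₀ = c₂ t₀) : c₁ = c₂ := by
  have hclosed : IsClosed {t | c₁ t = c₂ t} :=
    isClosed_eq (continuous_iff_continuousAt.2 fun t => (h₁ t).continuousAt)
      (continuous_iff_continuousAt.2 fun t => (h₂ t).continuousAt)
  have hopen : IsOpen {t | c₁ t = c₂ t} := by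
    refine isOpen_iff_mem_nhds.2 fun t (ht : c₁ t = c₂ t) => ?_
    obtain ⟨K, s, hs, hK⟩ := hV (c₁ t)
    exact ODE_solution_unique_of_eventually (v := fun _ => V) (s := fun _ => s)
      (.of_forall fun _ => hK)
      (((h₁ t).continuousAt.eventually_mem hs).mono fun u hu => ⟨h₁ u, hu⟩)
      (((h₂ t).continuousAt.eventually_mem (ht ▸ hs)).mono fun u hu => ⟨h₂ u, hu⟩) ht
  funext t
  exact eq_univ_iff_forall.1 (IsClopen.eq_univ ⟨hclosed, hopen⟩ ⟨t₀, h₀⟩) t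

section Flow

variable {E : Type*} [NormedAddCommGroup E] [NormedSpace ℝ E]

def IsFlowOf (V : E → E) (φ : ℝ → E → E) : Prop :=
  (∀ x, φ 0 x = x) ∧ ∀ x t, HasDerivAt (fun s => φ s x) (V (φ t x)) t

namespace IsFlowOf

variable {V : E → E} {φ : ℝ → E → E}

lemma continuous_trajectory (hφ : IsFlowOf V φ) (x : E) : Continuous fun t => φ t x :=
  continuous_iff_continuousAt.2 fun t => (hφ.2 x t).continuousAt

lemma dist_le {C : ℝ} (hφ : IsFlowOf V φ) (hV : ∀ y, ‖V y‖ ≤ C) (x : E) {t : ℝ} (ht : 0 ≤ t) :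
    dist (φ t x) x ≤ C * t := by
  have h := norm_image_sub_le_of_norm_deriv_le_segment' (f := fun s => φ s x)
    (fun s _ => (hφ.2 x s).hasDerivWithinAt) (fun s _ => hV _) t ⟨ht, le_rfl⟩
  simpa [dist_eq_norm, hφ.1] using h

lemma apply_add (hV : LocallyLipschitz V) (hφ : IsFlowOf V φ) (s t : ℝ) (x : E) :
    φ (s + t) x = φ t (φ s x) :=
  congrFun (ODE_solution_unique_of_locallyLipschitz hV (c₁ := fun t => φ (s + t) x)
    (fun t => (hφ.2 x (s + t)).comp_const_add s t) (hφ.2 (φ s x)) (t₀ := 0)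
    (by simp [hφ.1])) t

lemma lipschitzOnWith_ball {C : ℝ} {K : NNReal} {x : E} {ε T : ℝ} (hφ : IsFlowOf V φ)
    (hV : ∀ y, ‖V y‖ ≤ C) (hK : LipschitzOnWith K V (closedBall x ε)) (hT : 0 ≤ T)
    (hCT : C * T ≤ ε / 2) :
    LipschitzOnWith (Real.exp (K * T)).toNNReal (φ T) (ball x (ε / 2)) := by
  have hC : 0 ≤ C := (norm_nonneg _).trans (hV x)
  have stays : ∀ y ∈ ball x (ε / 2), ∀ t ∈ Ico 0 T, φ t y ∈ closedBall x ε := by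
    intro y hy t ht
    calc dist (φ t y) x ≤ dist (φ t y) y + dist y x := dist_triangle _ _ _
      _ ≤ C * T + ε / 2 :=
        add_le_add ((hφ.dist_le hV y ht.1).trans (by gcongr; exact ht.2.le)) (mem_ball.1 hy).le
      _ ≤ ε := by linarith
  refine LipschitzOnWith.of_dist_le_mul fun z hz w hw => ?_
  have h := dist_le_of_trajectories_ODE_of_mem (v := fun _ => V) (s := fun _ => closedBall x ε)
    (fun _ _ => hK) (hφ.continuous_trajectory z).continuousOn
    (fun t _ => (hφ.2 z t).hasDerivWithinAt) (stays z hz) (hφ.continuous_trajectory w).continuousOn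
    (fun t _ => (hφ.2 w t).hasDerivWithinAt) (stays w hw) (δ := dist z w) (by simp [hφ.1]) T
    ⟨hT, le_rfl⟩
  rw [Real.coe_toNNReal _ (Real.exp_pos _).le, mul_comm]
  simpa using h

lemma eventually_continuousAt {C : ℝ} (hφ : IsFlowOf V φ) (hV : ∀ y, ‖V y‖ ≤ C)
    (hVl : LocallyLipschitz V) (x : E) : ∀ᶠ T in 𝓝[≥] (0 : ℝ), ContinuousAt (φ T) x := by
  obtain ⟨K, s, hs, hK⟩ := hVl x
  obtain ⟨ε, hε, hεs⟩ := nhds_basis_closedBall.mem_iff.1 hs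
  have hsmall : ∀ᶠ T in 𝓝 (0 : ℝ), C * T < ε / 2 :=
    ((continuous_const_mul C).tendsto' 0 0 (mul_zero C)).eventually_lt_const (half_pos hε)
  filter_upwards [nhdsWithin_le_nhds hsmall, self_mem_nhdsWithin] with T hCT hT
  exact (hφ.lipschitzOnWith_ball hV (hK.mono hεs) hT hCT.le).continuousOn.continuousAt
    (ball_mem_nhds x (half_pos hε))

lemma omegaLim_apply (hV : LocallyLipschitz V) (hφ : IsFlowOf V φ) (s : ℝ) (x : E) :
    omegaLim φ (φ s x) = omegaLim φ x := by
  ext y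
  constructor
  · rintro ⟨t, ht, hy⟩
    refine ⟨fun n => s + t n, tendsto_atTop_add_const_left _ s ht, ?_⟩
    simpa [hφ.apply_add hV] using hy
  · rintro ⟨t, ht, hy⟩
    refine ⟨fun n => t n - s, tendsto_atTop_add_const_right _ (-s) ht, ?_⟩
    simpa [← hφ.apply_add hV] using hy

end IsFlowOf

end Flow

lemma lipschitzWith_inv_one_add_norm_smul {E : Type*} [NormedAddCommGroup E] [NormedSpace ℝ E] :
    LipschitzWith 2 fun u : E => (1 + ‖u‖)⁻¹ • u := by
  refine LipschitzWith.of_dist_le_mul fun u w => ?_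
  have hu : 0 < 1 + ‖u‖ := by positivity
  have hw : 0 < 1 + ‖w‖ := by positivity
  have hfirst : ‖(1 + ‖u‖)⁻¹ • (u - w)‖ ≤ ‖u - w‖ := by
    rw [norm_smul, Real.norm_of_nonneg (inv_nonneg.2 hu.le)]
    exact mul_le_of_le_one_left (norm_nonneg _) (inv_le_one_of_one_le₀ (by simp))
  have hsecond : ‖((1 + ‖u‖)⁻¹ - (1 + ‖w‖)⁻¹) • w‖ ≤ ‖u - w‖ := by
    rw [norm_smul, Real.norm_eq_abs, inv_sub_inv hu.ne' hw.ne', abs_div, abs_of_pos (mul_pos hu hw),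
      div_mul_eq_mul_div, div_le_iff₀ (mul_pos hu hw), add_sub_add_left_eq_sub]
    refine mul_le_mul ?_ ?_ (norm_nonneg _) (norm_nonneg _)
    · exact abs_sub_comm ‖w‖ ‖u‖ ▸ abs_norm_sub_norm_le u w
    · nlinarith [norm_nonneg u, norm_nonneg w]
  calc dist ((1 + ‖u‖)⁻¹ • u) ((1 + ‖w‖)⁻¹ • w)
      = ‖(1 + ‖u‖)⁻¹ • (u - w) + ((1 + ‖u‖)⁻¹ - (1 + ‖w‖)⁻¹) • w‖ := by
        rw [dist_eq_norm, smul_sub, sub_smul]; abel_nf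
    _ ≤ ‖u - w‖ + ‖u - w‖ := (norm_add_le _ _).trans (add_le_add hfirst hsecond)
    _ = 2 * dist u w := by rw [dist_eq_norm]; ring

lemma norm_inv_one_add_norm_smul_le_one {E : Type*} [NormedAddCommGroup E] [NormedSpace ℝ E]
    (u : E) : ‖(1 + ‖u‖)⁻¹ • u‖ ≤ 1 := by
  rw [norm_smul, Real.norm_of_nonneg (by positivity), inv_mul_le_iff₀ (by positivity)]
  linarith

lemma ContDiff.gradient {f : X → ℝ} {m n : WithTop ℕ∞} (hf : ContDiff ℝ n f) (hmn : m + 1 ≤ n) :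
    ContDiff ℝ m (gradient f) :=
  (InnerProductSpace.toDual ℝ X).symm.contDiff.comp (hf.fderiv_right hmn)

noncomputable def nsdField (f : X → ℝ) (y : X) : X :=
  -((1 + ‖gradient f y‖)⁻¹ • gradient f y)

lemma norm_nsdField_le (f : X → ℝ) (y : X) : ‖nsdField f y‖ ≤ 1 :=
  (norm_neg _).trans_le (norm_inv_one_add_norm_smul_le_one _)

lemma locallyLipschitz_nsdField {f : X → ℝ} (hf : ContDiff ℝ 2 f) :
    LocallyLipschitz (nsdField f) :=
  show LocallyLipschitz ((fun u : X => -((1 + ‖u‖)⁻¹ • u)) ∘ gradient f) from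
    lipschitzWith_inv_one_add_norm_smul.neg.locallyLipschitz.comp
      (hf.gradient (by norm_num)).locallyLipschitz

namespace IsNSDFlow

variable {f : X → ℝ} {η : ℝ → X → X}

lemma isFlowOf (hη : IsNSDFlow f η) : IsFlowOf (nsdField f) η := hη

lemma hasDerivAt_comp (hf : Differentiable ℝ f) (hη : IsNSDFlow f η) (x : X) (t : ℝ) :
    HasDerivAt (fun s => f (η s x))
      (-((1 + ‖gradient f (η t x)‖)⁻¹ * ‖gradient f (η t x)‖ ^ 2)) t := by
  refine ((hf _).hasGradientAt.hasFDerivAt.comp_hasDerivAt t (hη.2 x t)).congr_deriv ?_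
  rw [InnerProductSpace.toDual_apply_apply, inner_neg_right, real_inner_smul_right,
    real_inner_self_eq_norm_sq]

end IsNSDFlow

theorem stmt7_general (f : X → ℝ) (hf : ContDiff ℝ 2 f) (η : ℝ → X → X)
    (hη : IsNSDFlow f η) (F : Set X)
    (xbar : X) (hxbar : xbar ∈ frontier {x : X | omegaLim η x ⊆ F})
    (hmin : ∀ y ∈ frontier {x : X | omegaLim η x ⊆ F}, f xbar ≤ f y) :
    gradient f xbar = 0 := by
  by_contra hg
  have hdecrease : ∀ᶠ T in 𝓝[>] (0 : ℝ), f (η T xbar) < f xbar := by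
    have hderiv := hη.hasDerivAt_comp (hf.differentiable (by norm_num)) xbar 0
    rw [hη.1] at hderiv
    simpa only [hη.1] using hderiv.eventually_lt_of_neg
      (neg_neg_of_pos (mul_pos (by positivity) (pow_pos (norm_pos_iff.2 hg) 2)))
  have hcont : ∀ᶠ T in 𝓝[>] (0 : ℝ), ContinuousAt (η T) xbar :=
    nhdsWithin_mono _ Ioi_subset_Ici_self <| hη.isFlowOf.eventually_continuousAt
      (norm_nsdField_le f) (locallyLipschitz_nsdField hf) xbar
  obtain ⟨T, hlt, hT⟩ := (hdecrease.and hcont).exists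
  have hbasin : η T ⁻¹' {x | omegaLim η x ⊆ F} = {x | omegaLim η x ⊆ F} := by
    simp only [preimage_ofPred_eq, hη.isFlowOf.omegaLim_apply (locallyLipschitz_nsdField hf)]
  exact (hmin _ (hT.mem_frontier_of_preimage_eq hbasin hxbar)).not_gt hlt

theorem stmt7 (f : X → ℝ) (hf : ContDiff ℝ 2 f) (η : ℝ → X → X)
    (hη : IsNSDFlow f η) (c : ℝ) (x₀ : X) (hx₀ : f x₀ < c)
    (F : Set X) (hF : F = connectedComponentIn {x : X | f x < c} x₀)
    (xbar : X) (hxbar : xbar ∈ frontier {x : X | omegaLim η x ⊆ F})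
    (hmin : ∀ y ∈ frontier {x : X | omegaLim η x ⊆ F}, f xbar ≤ f y) :
    gradient f xbar = 0 :=
  stmt7_general f hf η hη F xbar hxbar hmin
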